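/- arXiv:1808.07732 — 2 statements merged into one kernel-verified Lean document; each statement's English description precedes it below -/
import Mathlib

section
/- For every integer l ≥ 6, 8/(π^{5/2}·(l+1)²) ≤ 2/(l·(l + √(l²-1))); consequently 2·∫_{√(2 log(π(l/2+1/2))/(π(l²-1)))}^∞ e^{-π(l²-1)x²} dx ≤ 1/√(l²-1) - 1/l. -/
/-!
Linearizing the exponent at the threshold, `b x² ≥ b a² + 2ba (x - a)`, bounds the Gaussian tail by
`∫_a^∞ e^{-bx²} ≤ e^{-ba²} / (2ba)`. At the threshold `a = √(t / b)` with `t = 2 log (π(l+1)/2)`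
this gives `e^{-t} = 4 / (π² (l+1)²)` and `ba = √(bt) ≥ √b = √π √(l²-1)`, so twice the tail is at
most `4 / (π^{5/2} (l+1)² √(l²-1))`. The first inequality (which holds because `π^{5/2} ≥ 8` and
`√(l²-1) ≤ l`) turns this into `1 / (l (l + √(l²-1)) √(l²-1)) = 1/√(l²-1) - 1/l`.
-/

open Real MeasureTheory Set

theorem integral_Ioi_exp_neg_mul_sq_le {b a : ℝ} (hb : 0 < b) (ha : 0 < a) :
    ∫ x in Ioi a, exp (-b * x ^ 2) ≤ exp (-b * a ^ 2) / (2 * b * a) := by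
  have hslope : -(2 * b * a) < 0 := by have := mul_pos hb ha; linarith
  have hpoint : ∀ x, exp (-b * x ^ 2) ≤ exp (b * a ^ 2) * exp (-(2 * b * a) * x) := by
    intro x
    rw [← exp_add, exp_le_exp]
    nlinarith [mul_nonneg hb.le (sq_nonneg (x - a))]
  calc ∫ x in Ioi a, exp (-b * x ^ 2)
      ≤ ∫ x in Ioi a, exp (b * a ^ 2) * exp (-(2 * b * a) * x) :=
        setIntegral_mono (integrable_exp_neg_mul_sq hb).integrableOn
          ((integrableOn_exp_mul_Ioi hslope a).const_mul _) hpoint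
    _ = exp (b * a ^ 2) * exp (-(2 * b * a) * a) / (2 * b * a) := by
        rw [integral_const_mul, integral_exp_mul_Ioi hslope, neg_div_neg_eq, mul_div_assoc]
    _ = exp (-b * a ^ 2) / (2 * b * a) := by
        rw [← exp_add]
        ring_nf

theorem rpow_five_halves {x : ℝ} (hx : 0 ≤ x) : x ^ (5 / 2 : ℝ) = x ^ 2 * √x := by
  rw [show (5 / 2 : ℝ) = (2 : ℕ) + 1 / 2 by norm_num, rpow_add' hx (by norm_num), rpow_natCast,
    sqrt_eq_rpow]

theorem eight_div_pi_rpow_le {L : ℝ} (hL : 0 < L) :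
    8 / (π ^ (5 / 2 : ℝ) * (L + 1) ^ 2) ≤ 2 / (L * (L + √(L ^ 2 - 1))) := by
  have hsqrt : √(L ^ 2 - 1) ≤ L := sqrt_le_iff.mpr ⟨hL.le, by linarith⟩
  have hpi : 8 ≤ π ^ (5 / 2 : ℝ) := by
    rw [rpow_five_halves pi_pos.le]
    have hsqrt_pi : 1 ≤ √π := one_le_sqrt.mpr (by linarith [pi_gt_three])
    nlinarith [pi_gt_three]
  rw [div_le_div_iff₀ (by positivity) (by positivity)]
  nlinarith [mul_le_mul_of_nonneg_left hsqrt hL.le,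
    mul_le_mul_of_nonneg_right hpi (sq_nonneg (L + 1))]

theorem one_div_sqrt_sub_one_div {L : ℝ} (hL : 1 < L) :
    1 / √(L ^ 2 - 1) - 1 / L = 1 / (L * (L + √(L ^ 2 - 1)) * √(L ^ 2 - 1)) := by
  have hc : 0 < L ^ 2 - 1 := by nlinarith
  field_simp
  linear_combination -sq_sqrt hc.le

theorem two_mul_integral_Ioi_sqrt_exp_neg_mul_sq_le {b t : ℝ} (hb : 0 < b) (ht : 1 ≤ t) :
    2 * ∫ x in Ioi √(t / b), exp (-b * x ^ 2) ≤ exp (-t) / √b := by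
  set a := √(t / b)
  have ha : 0 < a := sqrt_pos.mpr (by positivity)
  have hba : b * a ^ 2 = t := by
    rw [sq_sqrt (by positivity)]
    field_simp
  have hsqrt : √b ≤ b * a :=
    sqrt_le_iff.mpr ⟨by positivity, by nlinarith [show (b * a) ^ 2 = b * t by rw [← hba]; ring]⟩
  calc 2 * ∫ x in Ioi a, exp (-b * x ^ 2)
      ≤ 2 * (exp (-b * a ^ 2) / (2 * b * a)) := by
        gcongr
        exact integral_Ioi_exp_neg_mul_sq_le hb ha
    _ = exp (-t) / (b * a) := by
        rw [neg_mul, hba]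
        field_simp
    _ ≤ exp (-t) / √b := by gcongr

theorem two_mul_integral_Ioi_exp_neg_pi_mul_sq_le {L : ℝ} (hL : 1 < L) :
    2 * ∫ x in Ioi √(2 * log (π * (L / 2 + 1 / 2)) / (π * (L ^ 2 - 1))),
        exp (-π * (L ^ 2 - 1) * x ^ 2) ≤ 1 / √(L ^ 2 - 1) - 1 / L := by
  set M := π * (L / 2 + 1 / 2) with hM
  have hc : 0 < L ^ 2 - 1 := by nlinarith
  have hMpos : 0 < M := by positivity
  have hlog : 1 ≤ 2 * log M := by
    have hexp_one : exp 1 ≤ M := by nlinarith [exp_one_lt_d9, pi_gt_three]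
    linarith [(le_log_iff_exp_le hMpos).mpr hexp_one]
  have hexp : exp (-(2 * log M)) = 4 / (π ^ 2 * (L + 1) ^ 2) := by
    rw [exp_neg, two_mul, exp_add, exp_log hMpos, hM]
    field_simp
    ring
  have htail := two_mul_integral_Ioi_sqrt_exp_neg_mul_sq_le (b := π * (L ^ 2 - 1))
    (by positivity) hlog
  simp only [neg_mul] at htail ⊢
  calc 2 * ∫ x in Ioi √(2 * log M / (π * (L ^ 2 - 1))), exp (-(π * (L ^ 2 - 1) * x ^ 2))
      ≤ exp (-(2 * log M)) / √(π * (L ^ 2 - 1)) := htail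
    _ = 8 / (π ^ (5 / 2 : ℝ) * (L + 1) ^ 2) / (2 * √(L ^ 2 - 1)) := by
        rw [hexp, sqrt_mul pi_pos.le, rpow_five_halves pi_pos.le]
        field_simp
        ring
    _ ≤ 2 / (L * (L + √(L ^ 2 - 1))) / (2 * √(L ^ 2 - 1)) := by
        gcongr ?_ / _
        exact eight_div_pi_rpow_le (by linarith)
    _ = 1 / √(L ^ 2 - 1) - 1 / L := by
        rw [one_div_sqrt_sub_one_div hL]
        field_simp

theorem stmt7 (l : ℕ) (hl : 6 ≤ l) :
    8 / (π ^ ((5 : ℝ) / 2) * ((l : ℝ) + 1) ^ 2) ≤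
      2 / ((l : ℝ) * ((l : ℝ) + Real.sqrt ((l : ℝ) ^ 2 - 1))) ∧
    2 * ∫ x in Set.Ioi
        (Real.sqrt (2 * Real.log (π * ((l : ℝ) / 2 + 1 / 2)) / (π * ((l : ℝ) ^ 2 - 1)))),
        Real.exp (-π * ((l : ℝ) ^ 2 - 1) * x ^ 2) ≤
      1 / Real.sqrt ((l : ℝ) ^ 2 - 1) - 1 / (l : ℝ) := by
  have hL : (1 : ℝ) < l := by exact_mod_cast (show 1 < l by omega)
  exact ⟨eight_div_pi_rpow_le (by linarith), two_mul_integral_Ioi_exp_neg_pi_mul_sq_le hL⟩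
end

section
/- Let l ≥ 6 be an integer and let h(x) = sin(lπx)/(l sin πx). Then for every x ∈ (0, 1/l), |h'(x)| ≤ (lπ/2)·((π/l)/sin(π/l))² ≤ 2l. -/
/-!
Writing `u = π x`, the quotient rule gives `h'(x) = -π N(π x) / (l sin² (π x))` with
`N(u) = dirichletNumerator l u = sin (l u) cos u - l cos (l u) sin u`. Since `N(0) = 0` and
`N'(u) = (l² - 1) sin (l u) sin u`, we get `0 ≤ N(u)` on `[0, π / l]` and `N(u) ≤ (l u)² / 2`
for `u ≥ 0`, so `|h'(x)| ≤ (l π / 2) (u / sin u)²`. Concavity of `sin` makes `u / sin u`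
increasing on `(0, π)`, which bounds this by its value at `u = π / l`, and also bounds
`(π / l) / sin (π / l)` by the value `π / 3` at `π / 6`; the last inequality is then `π³ ≤ 36`.
-/

open Real Set

lemma monotoneOn_div_sin : MonotoneOn (fun x => x / sin x) (Ioo 0 π) := by
  intro u hu b hb hub
  have hsin : sin b / b ≤ sin u / u := by
    simpa [slope_def_field] using
      strictConcaveOn_sin_Icc.concaveOn.antitoneOn_slope_gt ⟨le_rfl, pi_pos.le⟩
        ⟨⟨hu.1.le, hu.2.le⟩, hu.1⟩ ⟨⟨hb.1.le, hb.2.le⟩, hb.1⟩ hub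
  simp only [← inv_div (sin _)]
  exact inv_anti₀ (div_pos (sin_pos_of_pos_of_lt_pi hb.1 hb.2) hb.1) hsin

noncomputable def dirichletNumerator (L u : ℝ) : ℝ :=
  sin (L * u) * cos u - L * cos (L * u) * sin u

lemma hasDerivAt_dirichletNumerator (L u : ℝ) :
    HasDerivAt (dirichletNumerator L) ((L ^ 2 - 1) * (sin (L * u) * sin u)) u := by
  have hLu : HasDerivAt (fun y => L * y) L u := by simpa using (hasDerivAt_id u).const_mul L
  have := (hLu.sin.mul (hasDerivAt_cos u)).sub
    ((hLu.cos.const_mul L).mul (hasDerivAt_sin u))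
  exact this.congr_deriv (by ring)

lemma dirichletNumerator_zero (L : ℝ) : dirichletNumerator L 0 = 0 := by
  simp [dirichletNumerator]

lemma dirichletNumerator_nonneg {L u : ℝ} (hL : 1 ≤ L) (hu : 0 ≤ u) (huL : u ≤ π / L) :
    0 ≤ dirichletNumerator L u := by
  have hL0 : 0 < L := by linarith
  have hmono : MonotoneOn (dirichletNumerator L) (Icc 0 (π / L)) := by
    refine monotoneOn_of_hasDerivWithinAt_nonneg (convex_Icc _ _)
      (fun y _ => (hasDerivAt_dirichletNumerator L y).continuousAt.continuousWithinAt)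
      (fun y _ => (hasDerivAt_dirichletNumerator L y).hasDerivWithinAt) ?_
    intro y hy
    rw [interior_Icc] at hy
    obtain ⟨hy0, hyL⟩ := hy
    rw [lt_div_iff₀ hL0] at hyL
    have hsinLy : 0 ≤ sin (L * y) := sin_nonneg_of_nonneg_of_le_pi (by positivity) (by linarith)
    have hsiny : 0 ≤ sin y := sin_nonneg_of_nonneg_of_le_pi hy0.le (by nlinarith)
    have hL2 : 0 ≤ L ^ 2 - 1 := by nlinarith
    positivity
  simpa [dirichletNumerator_zero] using
    hmono ⟨le_rfl, by positivity⟩ ⟨hu, huL⟩ hu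

lemma dirichletNumerator_le {L u : ℝ} (hL : 1 ≤ L) (hu : 0 ≤ u) :
    dirichletNumerator L u ≤ (L * u) ^ 2 / 2 := by
  have hderiv (y : ℝ) : HasDerivAt (fun y => (L * y) ^ 2 / 2 - dirichletNumerator L y)
      (L ^ 2 * y - (L ^ 2 - 1) * (sin (L * y) * sin y)) y := by
    have := (((hasDerivAt_id y).const_mul L).pow 2).div_const 2
    exact (this.sub (hasDerivAt_dirichletNumerator L y)).congr_deriv (by simp only [id]; ring)
  have hmono : MonotoneOn (fun y => (L * y) ^ 2 / 2 - dirichletNumerator L y) (Ici 0) := by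
    refine monotoneOn_of_hasDerivWithinAt_nonneg (convex_Ici _)
      (fun y _ => (hderiv y).continuousAt.continuousWithinAt)
      (fun y _ => (hderiv y).hasDerivWithinAt) ?_
    intro y hy
    rw [interior_Ici, mem_Ioi] at hy
    have hsin : sin (L * y) * sin y ≤ y := by
      calc sin (L * y) * sin y ≤ |sin (L * y)| * |sin y| := by rw [← abs_mul]; exact le_abs_self _
        _ ≤ 1 * |y| := mul_le_mul (abs_sin_le_one _) abs_sin_le_abs (abs_nonneg _) zero_le_one
        _ = y := by rw [one_mul, abs_of_pos hy]
    have hL2 : 0 ≤ L ^ 2 - 1 := by nlinarith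
    nlinarith
  have := hmono (mem_Ici.2 le_rfl) (mem_Ici.2 hu) hu
  simp only [mul_zero, dirichletNumerator_zero] at this
  linarith

lemma hasDerivAt_sin_mul_div_mul_sin {L x : ℝ} (hL : L ≠ 0) (hx : sin (π * x) ≠ 0) :
    HasDerivAt (fun t => sin (L * π * t) / (L * sin (π * t)))
      (-(π * dirichletNumerator L (π * x) / (L * sin (π * x) ^ 2))) x := by
  have hnum := ((hasDerivAt_id x).const_mul (L * π)).sin
  have hden := (((hasDerivAt_id x).const_mul π).sin).const_mul L
  refine (hnum.div hden (mul_ne_zero hL hx)).congr_deriv ?_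
  simp only [dirichletNumerator, id, mul_one, ← mul_assoc]
  field_simp
  ring

lemma abs_deriv_sin_mul_div_mul_sin_le {L x : ℝ} (hL : 1 < L) (hx : x ∈ Ioo 0 (1 / L)) :
    |deriv (fun t => sin (L * π * t) / (L * sin (π * t))) x| ≤
      (L * π / 2) * ((π / L) / sin (π / L)) ^ 2 := by
  obtain ⟨hx0, hxL⟩ := hx
  have hL0 : 0 < L := by linarith
  have hπL : π / L < π := div_lt_self pi_pos hL
  have hπx : π * x < π / L := by
    rw [lt_div_iff₀ hL0]
    rw [lt_div_iff₀ hL0] at hxL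
    nlinarith [pi_pos]
  have hu : π * x ∈ Ioo 0 π := ⟨by positivity, hπx.trans hπL⟩
  have hsin : 0 < sin (π * x) := sin_pos_of_pos_of_lt_pi hu.1 hu.2
  rw [(hasDerivAt_sin_mul_div_mul_sin hL0.ne' hsin.ne').deriv, abs_neg,
    abs_of_nonneg (div_nonneg (mul_nonneg pi_pos.le
      (dirichletNumerator_nonneg hL.le hu.1.le hπx.le)) (by positivity))]
  calc π * dirichletNumerator L (π * x) / (L * sin (π * x) ^ 2)
      ≤ π * ((L * (π * x)) ^ 2 / 2) / (L * sin (π * x) ^ 2) := by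
        gcongr
        exact dirichletNumerator_le hL.le hu.1.le
    _ = (L * π / 2) * (π * x / sin (π * x)) ^ 2 := by field_simp
    _ ≤ (L * π / 2) * ((π / L) / sin (π / L)) ^ 2 := by
        gcongr ?_ * ?_
        exact pow_le_pow_left₀ (div_pos hu.1 hsin).le
          (monotoneOn_div_sin hu ⟨hu.1.trans hπx, hπL⟩ hπx.le) 2

lemma mul_div_sin_pi_div_sq_le {L : ℝ} (hL : 6 ≤ L) :
    (L * π / 2) * ((π / L) / sin (π / L)) ^ 2 ≤ 2 * L := by
  have hπL : π / L ≤ π / 6 := div_le_div_of_nonneg_left pi_pos.le (by norm_num) hL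
  have hratio : (π / L) / sin (π / L) ≤ π / 3 := by
    have := monotoneOn_div_sin ⟨by positivity, by linarith [pi_pos]⟩
      ⟨by positivity, by linarith [pi_pos]⟩ hπL
    rw [show π / 3 = π / 6 / sin (π / 6) by rw [sin_pi_div_six]; ring]
    exact this
  have hπ3 : π ^ 3 ≤ 36 := calc
    π ^ 3 ≤ 3.15 ^ 3 := pow_le_pow_left₀ pi_pos.le pi_lt_d2.le 3
    _ ≤ 36 := by norm_num
  calc (L * π / 2) * ((π / L) / sin (π / L)) ^ 2 ≤ (L * π / 2) * (π / 3) ^ 2 := by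
        gcongr
        exact div_nonneg (by positivity) (sin_nonneg_of_nonneg_of_le_pi (by positivity)
          (by linarith [pi_pos]))
    _ = L * π ^ 3 / 18 := by ring
    _ ≤ 2 * L := by nlinarith

theorem stmt11 (l : ℕ) (hl : 6 ≤ l) (x : ℝ) (hx : x ∈ Set.Ioo (0 : ℝ) (1 / (l : ℝ))) :
    |deriv (fun t : ℝ => Real.sin ((l : ℝ) * π * t) / ((l : ℝ) * Real.sin (π * t))) x| ≤
        ((l : ℝ) * π / 2) * ((π / (l : ℝ)) / Real.sin (π / (l : ℝ))) ^ 2 ∧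
      ((l : ℝ) * π / 2) * ((π / (l : ℝ)) / Real.sin (π / (l : ℝ))) ^ 2 ≤ 2 * (l : ℝ) := by
  have hl' : (6 : ℝ) ≤ l := by exact_mod_cast hl
  exact ⟨abs_deriv_sin_mul_div_mul_sin_le (by linarith) hx, mul_div_sin_pi_div_sq_le hl'⟩
end
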